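/- arXiv:2508.02077 — 2 statements merged into one kernel-verified Lean document; each statement's English description precedes it below -/
import Mathlib

section
/- For any f, g ∈ L^p(Ω)^d with p ∈ (1,∞), the monotonicity inequality ∫_Ω (|f|^{p−2}f − |g|^{p−2}g) · (f − g) dx ≥ (‖f‖_{L^p(Ω)}^{p−1} − ‖g‖_{L^p(Ω)}^{p−1}) (‖f‖_{L^p(Ω)} − ‖g‖_{L^p(Ω)}) ≥ 0 holds. -/
/-!
Write `J u = |u|^{p-2} u`, so that `⟪J u, u⟫ = |u|^p` and `|J u| = |u|^{p-1}`. Expanding,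
`⟪J f - J g, f - g⟫ = |f|^p + |g|^p - ⟪J f, g⟫ - ⟪J g, f⟫`, and Hölder's inequality with the
exponents `p / (p - 1)` and `p` bounds `∫ ⟪J f, g⟫` by `‖f‖_p^{p-1} ‖g‖_p`. Hence the integral is at
least `A^p + B^p - A^{p-1} B - B^{p-1} A = (A^{p-1} - B^{p-1}) (A - B)` with `A = ‖f‖_p`,
`B = ‖g‖_p`, which is nonnegative because `t ↦ t^{p-1}` is monotone.
-/

open MeasureTheory Filter Topology
open scoped ENNReal RealInnerProductSpace

noncomputable section

/-- `d`-dimensional Euclidean space. -/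
abbrev Euc (d : ℕ) : Type := EuclideanSpace ℝ (Fin d)

namespace Real

lemma rpow_sub_one_mul_self {x : ℝ} (hx : 0 ≤ x) {p : ℝ} (hp : p ≠ 0) :
    x ^ (p - 1) * x = x ^ p := by
  rw [← rpow_add_one' hx (by simpa using hp), sub_add_cancel]

lemma rpow_inv_rpow_sub_one_mul_rpow_inv {I : ℝ} (hI : 0 ≤ I) {p : ℝ} (hp : p ≠ 0) :
    (I ^ p⁻¹) ^ (p - 1) * I ^ p⁻¹ = I := by
  rw [rpow_sub_one_mul_self (rpow_nonneg hI _) hp, rpow_inv_rpow hI hp]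

lemma rpow_sub_rpow_mul_sub_nonneg {a b s : ℝ} (ha : 0 ≤ a) (hb : 0 ≤ b) (hs : 0 ≤ s) :
    0 ≤ (a ^ s - b ^ s) * (a - b) := by
  rcases le_total a b with hab | hab
  · exact mul_nonneg_of_nonpos_of_nonpos (sub_nonpos.2 (rpow_le_rpow ha hab hs))
      (sub_nonpos.2 hab)
  · exact mul_nonneg (sub_nonneg.2 (rpow_le_rpow hb hab hs)) (sub_nonneg.2 hab)

end Real

section DualityMap

variable {E : Type*} [NormedAddCommGroup E] [InnerProductSpace ℝ E] {p : ℝ}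

/-- `|u|^{p-2} u`; it is `0` at `u = 0` whatever the value of `0 ^ (p - 2)`. -/
def dualityMap (p : ℝ) (u : E) : E := ‖u‖ ^ (p - 2) • u

lemma norm_dualityMap (hp : p ≠ 1) (u : E) : ‖dualityMap p u‖ = ‖u‖ ^ (p - 1) := by
  rw [dualityMap, norm_smul, Real.norm_of_nonneg (Real.rpow_nonneg (norm_nonneg u) _),
    show p - 2 = p - 1 - 1 by ring,
    Real.rpow_sub_one_mul_self (norm_nonneg u) (sub_ne_zero.2 hp)]

lemma inner_dualityMap_self (hp : p ≠ 0) (u : E) : ⟪dualityMap p u, u⟫ = ‖u‖ ^ p := by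
  rw [dualityMap, real_inner_smul_left, real_inner_self_eq_norm_sq, ← Real.rpow_two,
    ← Real.rpow_add' (norm_nonneg u) (by simpa using hp), sub_add_cancel]

end DualityMap

section Integral

variable {α E : Type*} [MeasurableSpace α] {μ : Measure α}
  [NormedAddCommGroup E] [InnerProductSpace ℝ E] {p : ℝ} {f g : α → E}

lemma MeasureTheory.AEStronglyMeasurable.dualityMap (hf : AEStronglyMeasurable f μ) (p : ℝ) :
    AEStronglyMeasurable (fun x => dualityMap p (f x)) μ :=
  (hf.norm.aemeasurable.pow_const _).aestronglyMeasurable.smul hf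

lemma MeasureTheory.MemLp.dualityMap (hp : 1 < p) (hf : MemLp f (ENNReal.ofReal p) μ) :
    MemLp (fun x => dualityMap p (f x)) (ENNReal.ofReal (p / (p - 1))) μ := by
  have h := hf.norm_rpow_div (ENNReal.ofReal (p - 1))
  rw [ENNReal.toReal_ofReal (by linarith), ← ENNReal.ofReal_div_of_pos (by linarith)] at h
  refine h.of_le (hf.1.dualityMap p) (Eventually.of_forall fun _ => ?_)
  rw [norm_dualityMap hp.ne', Real.norm_of_nonneg (Real.rpow_nonneg (norm_nonneg _) _)]

lemma integrable_norm_dualityMap_mul_norm (hp : 1 < p) (hf : MemLp f (ENNReal.ofReal p) μ)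
    (hg : MemLp g (ENNReal.ofReal p) μ) :
    Integrable (fun x => ‖dualityMap p (f x)‖ * ‖g x‖) μ :=
  have : ENNReal.HolderConjugate (ENNReal.ofReal (p / (p - 1))) (ENNReal.ofReal p) :=
    (Real.HolderConjugate.conjExponent hp).symm.ennrealOfReal
  (hf.dualityMap hp).norm.integrable_mul hg.norm

lemma integrable_inner_dualityMap (hp : 1 < p) (hf : MemLp f (ENNReal.ofReal p) μ)
    (hg : MemLp g (ENNReal.ofReal p) μ) :
    Integrable (fun x => ⟪dualityMap p (f x), g x⟫) μ :=
  (integrable_norm_dualityMap_mul_norm hp hf hg).mono' ((hf.1.dualityMap p).inner hg.1)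
    (Eventually.of_forall fun _ => norm_inner_le_norm _ _)

lemma integral_inner_dualityMap_le (hp : 1 < p) (hf : MemLp f (ENNReal.ofReal p) μ)
    (hg : MemLp g (ENNReal.ofReal p) μ) :
    ∫ x, ⟪dualityMap p (f x), g x⟫ ∂μ
      ≤ ((∫ x, ‖f x‖ ^ p ∂μ) ^ p⁻¹) ^ (p - 1) * (∫ x, ‖g x‖ ^ p ∂μ) ^ p⁻¹ := by
  have hpq : (p / (p - 1)).HolderConjugate p := (Real.HolderConjugate.conjExponent hp).symm
  have hpow (x : α) : ‖dualityMap p (f x)‖ ^ (p / (p - 1)) = ‖f x‖ ^ p := by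
    rw [norm_dualityMap hp.ne', ← Real.rpow_mul (norm_nonneg _), hpq.symm.sub_one_mul_conj]
  have hfp : 0 ≤ ∫ x, ‖f x‖ ^ p ∂μ := by positivity
  calc ∫ x, ⟪dualityMap p (f x), g x⟫ ∂μ ≤ ∫ x, ‖dualityMap p (f x)‖ * ‖g x‖ ∂μ :=
        integral_mono (integrable_inner_dualityMap hp hf hg)
          (integrable_norm_dualityMap_mul_norm hp hf hg) fun _ => real_inner_le_norm _ _
    _ ≤ (∫ x, ‖f x‖ ^ p ∂μ) ^ (1 / (p / (p - 1))) * (∫ x, ‖g x‖ ^ p ∂μ) ^ (1 / p) := by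
        simpa only [hpow] using integral_mul_norm_le_Lp_mul_Lq hpq (hf.dualityMap hp) hg
    _ = _ := by rw [one_div_div, div_eq_inv_mul, Real.rpow_mul hfp, one_div]

lemma integral_inner_dualityMap_sub_sub (hp : 1 < p) (hf : MemLp f (ENNReal.ofReal p) μ)
    (hg : MemLp g (ENNReal.ofReal p) μ) :
    ∫ x, ⟪dualityMap p (f x) - dualityMap p (g x), f x - g x⟫ ∂μ
      = ∫ x, ‖f x‖ ^ p ∂μ + ∫ x, ‖g x‖ ^ p ∂μ
        - ∫ x, ⟪dualityMap p (f x), g x⟫ ∂μ - ∫ x, ⟪dualityMap p (g x), f x⟫ ∂μ := by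
  have hexpand (x : α) : ⟪dualityMap p (f x) - dualityMap p (g x), f x - g x⟫
      = ⟪dualityMap p (f x), f x⟫ + ⟪dualityMap p (g x), g x⟫
        - ⟪dualityMap p (f x), g x⟫ - ⟪dualityMap p (g x), f x⟫ := by
    simp only [inner_sub_left, inner_sub_right]
    ring
  have hff := integrable_inner_dualityMap hp hf hf
  have hgg := integrable_inner_dualityMap hp hg hg
  have hfg := integrable_inner_dualityMap hp hf hg
  have hgf := integrable_inner_dualityMap hp hg hf
  simp only [hexpand]
  rw [integral_sub ?_ hgf, integral_sub ?_ hfg, integral_add hff hgg]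
  · simp only [inner_dualityMap_self (zero_lt_one.trans hp).ne']
  exacts [hff.add hgg, (hff.add hgg).sub hfg]

theorem rpow_sub_mul_sub_le_integral_inner_dualityMap_sub (hp : 1 < p)
    (hf : MemLp f (ENNReal.ofReal p) μ) (hg : MemLp g (ENNReal.ofReal p) μ) :
    (((∫ x, ‖f x‖ ^ p ∂μ) ^ p⁻¹) ^ (p - 1) - ((∫ x, ‖g x‖ ^ p ∂μ) ^ p⁻¹) ^ (p - 1))
        * ((∫ x, ‖f x‖ ^ p ∂μ) ^ p⁻¹ - (∫ x, ‖g x‖ ^ p ∂μ) ^ p⁻¹)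
      ≤ ∫ x, ⟪dualityMap p (f x) - dualityMap p (g x), f x - g x⟫ ∂μ := by
  have hp0 : p ≠ 0 := (zero_lt_one.trans hp).ne'
  have hf' := Real.rpow_inv_rpow_sub_one_mul_rpow_inv
    (by positivity : 0 ≤ ∫ x, ‖f x‖ ^ p ∂μ) hp0
  have hg' := Real.rpow_inv_rpow_sub_one_mul_rpow_inv
    (by positivity : 0 ≤ ∫ x, ‖g x‖ ^ p ∂μ) hp0
  have hfg := integral_inner_dualityMap_le hp hf hg
  have hgf := integral_inner_dualityMap_le hp hg hf
  rw [integral_inner_dualityMap_sub_sub hp hf hg]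
  linear_combination hfg + hgf + hf' + hg'

end Integral

theorem stmt9_general {d : ℕ} {p : ℝ} (hp : 1 < p)
    (Ω : Set (Euc d))
    (f g : Euc d → Euc d)
    (hf : MemLp f (ENNReal.ofReal p) (volume.restrict Ω))
    (hg : MemLp g (ENNReal.ofReal p) (volume.restrict Ω)) :
    (((∫ x in Ω, ‖f x‖ ^ p) ^ p⁻¹) ^ (p - 1) - ((∫ x in Ω, ‖g x‖ ^ p) ^ p⁻¹) ^ (p - 1))
        * ((∫ x in Ω, ‖f x‖ ^ p) ^ p⁻¹ - (∫ x in Ω, ‖g x‖ ^ p) ^ p⁻¹)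
      ≤ ∫ x in Ω,
          ⟪(‖f x‖ ^ (p - 2)) • f x - (‖g x‖ ^ (p - 2)) • g x, f x - g x⟫ ∧
    0 ≤ (((∫ x in Ω, ‖f x‖ ^ p) ^ p⁻¹) ^ (p - 1)
          - ((∫ x in Ω, ‖g x‖ ^ p) ^ p⁻¹) ^ (p - 1))
        * ((∫ x in Ω, ‖f x‖ ^ p) ^ p⁻¹ - (∫ x in Ω, ‖g x‖ ^ p) ^ p⁻¹) :=
  ⟨rpow_sub_mul_sub_le_integral_inner_dualityMap_sub hp hf hg,
    Real.rpow_sub_rpow_mul_sub_nonneg (by positivity) (by positivity) (by linarith)⟩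

/-- **monotonicity inequality.** For any `f, g ∈ L^p(Ω)^d` with
`p ∈ (1,∞)`,
`∫_Ω (|f|^{p−2}f − |g|^{p−2}g) · (f − g) dx
  ≥ (‖f‖_{L^p}^{p−1} − ‖g‖_{L^p}^{p−1}) (‖f‖_{L^p} − ‖g‖_{L^p}) ≥ 0`. -/
theorem stmt9 {d : ℕ} {p : ℝ} (hp : 1 < p)
    (Ω : Set (Euc d)) (hΩo : IsOpen Ω) (hΩb : Bornology.IsBounded Ω)
    (f g : Euc d → Euc d)
    (hf : MemLp f (ENNReal.ofReal p) (volume.restrict Ω))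
    (hg : MemLp g (ENNReal.ofReal p) (volume.restrict Ω)) :
    (((∫ x in Ω, ‖f x‖ ^ p) ^ p⁻¹) ^ (p - 1) - ((∫ x in Ω, ‖g x‖ ^ p) ^ p⁻¹) ^ (p - 1))
        * ((∫ x in Ω, ‖f x‖ ^ p) ^ p⁻¹ - (∫ x in Ω, ‖g x‖ ^ p) ^ p⁻¹)
      ≤ ∫ x in Ω,
          ⟪(‖f x‖ ^ (p - 2)) • f x - (‖g x‖ ^ (p - 2)) • g x, f x - g x⟫ ∧
    0 ≤ (((∫ x in Ω, ‖f x‖ ^ p) ^ p⁻¹) ^ (p - 1)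
          - ((∫ x in Ω, ‖g x‖ ^ p) ^ p⁻¹) ^ (p - 1))
        * ((∫ x in Ω, ‖f x‖ ^ p) ^ p⁻¹ - (∫ x in Ω, ‖g x‖ ^ p) ^ p⁻¹) :=
  stmt9_general hp Ω f g hf hg

end
end

section
/- For every nested sequence of bisection meshes {T_k} with discrete Crouzeix–Raviart first eigenpairs (μ_k, u_k) normalized by ‖u_k‖_{L^p(Ω)} = 1, the uniform bound μ_k^{1/p} = ‖u_k‖_{1,p,k} ≤ |ũ_k|_{1,p} ≤ |ũ_0|_{1,p} holds for all k ≥ 0, where ũ_k is the L^p-normalized minimizer of the Rayleigh quotient over the conforming piecewise-linear space V_k; in particular {μ_k}_{k≥0} and {‖u_k‖_{1,p,k}}_{k≥0} are bounded by a constant depending only on T_0. -/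
open MeasureTheory Metric Set Filter Topology
open scoped ENNReal RealInnerProductSpace Classical

noncomputable section

/-- The local element size `h_T = |T|^{1/d}`. -/
def elemSize {d : ℕ} (T : Set (Euc d)) : ℝ := (volume T).toReal ^ ((d : ℝ)⁻¹)

/-- The local face size `h_F = |F|^{1/(d-1)}` (w.r.t. `(d-1)`-dimensional Hausdorff
measure). -/
def faceSize {d : ℕ} (F : Set (Euc d)) : ℝ :=
  (μH[(d : ℝ) - 1] F).toReal ^ (((d : ℝ) - 1)⁻¹)

/-- A (regular) conforming simplicial triangulation of the closure of `Ω`, together with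
its face/element incidence data: each face `F` lies on the element `elemOfFace F`, and
each interior face also on the (distinct) element `elemOfFace' F`; the remaining faces
are contained in the boundary of `Ω`. -/
structure Mesh (d : ℕ) (Ω : Set (Euc d)) where
  elems : Finset (Set (Euc d))
  simplex : ∀ T ∈ elems, ∃ vtx : Fin (d + 1) → Euc d,
      AffineIndependent ℝ vtx ∧ T = convexHull ℝ (Set.range vtx)
  covers : ⋃₀ (elems : Set (Set (Euc d))) = closure Ω
  disjointInteriors : ∀ T₁ ∈ elems, ∀ T₂ ∈ elems, T₁ ≠ T₂ →
      interior T₁ ∩ interior T₂ = ∅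
  faces : Finset (Set (Euc d))
  interiorFaces : Finset (Set (Euc d))
  interiorFaces_subset : interiorFaces ⊆ faces
  elemOfFace : Set (Euc d) → Set (Euc d)
  elemOfFace' : Set (Euc d) → Set (Euc d)
  elemOfFace_mem : ∀ F ∈ faces, elemOfFace F ∈ elems ∧ F ⊆ elemOfFace F
  elemOfFace'_mem : ∀ F ∈ interiorFaces,
      elemOfFace' F ∈ elems ∧ F ⊆ elemOfFace' F ∧ elemOfFace' F ≠ elemOfFace F
  boundaryFace_subset : ∀ F ∈ faces, F ∉ interiorFaces → F ⊆ frontier Ω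

/-- The affine function agreeing with `v` on the interior of `T` (junk value if there is
none). -/
def affinePiece {d : ℕ} (v : Euc d → ℝ) (T : Set (Euc d)) : Euc d →ᵃ[ℝ] ℝ :=
  if h : ∃ A : Euc d →ᵃ[ℝ] ℝ, Set.EqOn v A (interior T) then h.choose else 0

/-- The jump `[v]` of a piecewise affine function `v` across a face `F`: the difference
of the two adjacent affine pieces for an interior face, and the trace itself for a
boundary face. -/
def jumpFn {d : ℕ} {Ω : Set (Euc d)} (M : Mesh d Ω) (v : Euc d → ℝ)
    (F : Set (Euc d)) : Euc d → ℝ :=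
  if F ∈ M.interiorFaces then
    fun x => affinePiece v (M.elemOfFace F) x - affinePiece v (M.elemOfFace' F) x
  else fun x => affinePiece v (M.elemOfFace F) x

/-- `‖[v]‖_{L^p(F)}^p`, the `p`-th power of the `L^p(F)`-norm of the jump of `v` across
the face `F`. -/
def jumpP {d : ℕ} {Ω : Set (Euc d)} (p : ℝ) (M : Mesh d Ω) (v : Euc d → ℝ)
    (F : Set (Euc d)) : ℝ :=
  ∫ x in F, |jumpFn M v F x| ^ p ∂(μH[(d : ℝ) - 1])

/-- Membership in the Crouzeix–Raviart space `V_T^CR`: `v` is piecewise affine and the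
jump of `v` across every face has vanishing mean. -/
def IsCR {d : ℕ} {Ω : Set (Euc d)} (M : Mesh d Ω) (v : Euc d → ℝ) : Prop :=
  (∀ T ∈ M.elems, Set.EqOn v (affinePiece v T) (interior T)) ∧
  ∀ F ∈ M.faces, ∫ x in F, jumpFn M v F x ∂(μH[(d : ℝ) - 1]) = 0

/-- The broken (elementwise) gradient `∇_T v` of a piecewise affine function. -/
def brokenGrad {d : ℕ} {Ω : Set (Euc d)} (M : Mesh d Ω) (v : Euc d → ℝ)
    (x : Euc d) : Euc d :=
  if h : ∃ T, T ∈ M.elems ∧ x ∈ interior T then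
    (InnerProductSpace.toDual ℝ (Euc d)).symm
      (LinearMap.toContinuousLinearMap (affinePiece v h.choose).linear)
  else 0

/-- `‖v‖_{1,p,T}^p`, the `p`-th power of the broken `W^{1,p}` norm. -/
def brokenNormP {d : ℕ} {Ω : Set (Euc d)} (p : ℝ) (M : Mesh d Ω) (v : Euc d → ℝ) : ℝ :=
  ∫ x in Ω, ‖brokenGrad M v x‖ ^ p

/-- `‖v‖_{L^p(Ω)}^p`. -/
def lpNormP {d : ℕ} (Ω : Set (Euc d)) (p : ℝ) (v : Euc d → ℝ) : ℝ :=
  ∫ x in Ω, |v x| ^ p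

/-- The broken Rayleigh quotient `J_T(v)`. -/
def rayleigh {d : ℕ} {Ω : Set (Euc d)} (p : ℝ) (M : Mesh d Ω) (v : Euc d → ℝ) : ℝ :=
  brokenNormP p M v / lpNormP Ω p v

/-- `(μ, u)` is a discrete first eigenpair of the Crouzeix–Raviart minimization problem:
`u` is an `L^p`-normalized CR function minimizing the broken Rayleigh quotient over
`V^CR \ {0}` and `μ` is the minimum value. -/
def IsDiscEigenpair {d : ℕ} {Ω : Set (Euc d)} (p : ℝ) (M : Mesh d Ω)
    (μ : ℝ) (u : Euc d → ℝ) : Prop :=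
  IsCR M u ∧ lpNormP Ω p u = 1 ∧ μ = brokenNormP p M u ∧
  ∀ v, IsCR M v → lpNormP Ω p v ≠ 0 → μ ≤ rayleigh p M v

/-- `M'` is a refinement of `M`. -/
def Refines {d : ℕ} {Ω : Set (Euc d)} (M' M : Mesh d Ω) : Prop :=
  ∀ T' ∈ M'.elems, ∃ T ∈ M.elems, T' ⊆ T

/-- Uniform shape regularity with parameter `ρ`. -/
def ShapeRegular {d : ℕ} {Ω : Set (Euc d)} (ρ : ℝ) (M : Mesh d Ω) : Prop :=
  ∀ T ∈ M.elems, ∃ x : Euc d, Metric.ball x (ρ * Metric.diam T) ⊆ T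

/-- A nested, uniformly shape-regular sequence of conforming meshes, as produced by
successive bisection refinements of the initial mesh `T_0 = M 0`. -/
def AdmissibleSeq {d : ℕ} {Ω : Set (Euc d)} (M : ℕ → Mesh d Ω) : Prop :=
  (∀ k, Refines (M (k + 1)) (M k)) ∧ ∃ ρ > 0, ∀ k, ShapeRegular ρ (M k)

/-- Smooth compactly supported test functions on `Ω`. -/
def TestFun {d : ℕ} (Ω : Set (Euc d)) (φ : Euc d → ℝ) : Prop :=
  ContDiff ℝ (⊤ : ℕ∞) φ ∧ HasCompactSupport φ ∧ tsupport φ ⊆ Ω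

/-- `G` is the weak (distributional) gradient of `v` on `Ω`. -/
def HasWeakGrad {d : ℕ} (Ω : Set (Euc d)) (v : Euc d → ℝ) (G : Euc d → Euc d) : Prop :=
  ∀ φ, TestFun Ω φ → ∀ y : Euc d,
    ∫ x in Ω, v x * (fderiv ℝ φ x y) = - ∫ x in Ω, ⟪G x, y⟫ * φ x

/-- Membership in `W_0^{1,p}(Ω)` with weak gradient `G`: `v` lies in the closure of the
test functions in the `W^{1,p}`-norm. -/
def MemW01p {d : ℕ} (Ω : Set (Euc d)) (p : ℝ) (v : Euc d → ℝ)
    (G : Euc d → Euc d) : Prop :=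
  HasWeakGrad Ω v G ∧
  ∀ ε > 0, ∃ φ, TestFun Ω φ ∧
    (∫ x in Ω, |v x - φ x| ^ p) + (∫ x in Ω, ‖G x - gradient φ x‖ ^ p) < ε


/-- Membership in the conforming `P1` space `V_k ⊂ W_0^{1,p}(Ω)`. -/
def IsConformingP1 {d : ℕ} {Ω : Set (Euc d)} (M : Mesh d Ω) (v : Euc d → ℝ) : Prop :=
  (∀ T ∈ M.elems, ∃ A : Euc d →ᵃ[ℝ] ℝ, Set.EqOn v A T) ∧
  ContinuousOn v (closure Ω) ∧ ∀ x ∈ frontier Ω, v x = 0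

/-!
Every conforming `P1` function is a Crouzeix–Raviart function, so `μ_k = ‖u_k‖_{1,p,k}^p`
is at most `|ũ_k|_{1,p}^p`. Since the meshes are nested, `ũ_0` is also a conforming `P1`
function on `T_k`, and its broken gradient on `T_k` agrees almost everywhere with the one on
`T_0`; hence `|ũ_k|_{1,p}^p ≤ |ũ_0|_{1,p}^p` by minimality of `ũ_k`.
-/

namespace Mesh

variable {d : ℕ} {Ω : Set (Euc d)} (M : Mesh d Ω) {T : Set (Euc d)}

lemma convex_of_mem (hT : T ∈ M.elems) : Convex ℝ T := by
  obtain ⟨vtx, -, rfl⟩ := M.simplex T hT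
  exact convex_convexHull ℝ _

lemma isClosed_of_mem (hT : T ∈ M.elems) : IsClosed T := by
  obtain ⟨vtx, -, rfl⟩ := M.simplex T hT
  exact ((Set.finite_range vtx).isCompact_convexHull ℝ).isClosed

lemma interior_nonempty_of_mem (hT : T ∈ M.elems) : (interior T).Nonempty := by
  obtain ⟨vtx, hind, rfl⟩ := M.simplex T hT
  rw [(convex_convexHull ℝ _).interior_nonempty_iff_affineSpan_eq_top, affineSpan_convexHull,
    hind.affineSpan_eq_top_iff_card_eq_finrank_add_one]
  simp

lemma eq_of_mem_interior {T₁ T₂ : Set (Euc d)} (h₁ : T₁ ∈ M.elems) (h₂ : T₂ ∈ M.elems)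
    {x : Euc d} (hx₁ : x ∈ interior T₁) (hx₂ : x ∈ interior T₂) : T₁ = T₂ := by
  by_contra hne
  exact (M.disjointInteriors T₁ h₁ T₂ h₂ hne).subset ⟨hx₁, hx₂⟩

lemma ae_mem_interior : ∀ᵐ x, ∀ T ∈ M.elems, x ∈ T → x ∈ interior T := by
  refine (Finset.eventually_all M.elems).2 fun T hT => ?_
  filter_upwards [measure_eq_zero_iff_ae_notMem.mp ((M.convex_of_mem hT).addHaar_frontier volume)]
    with x hx hxT
  by_contra hxi
  exact hx ((M.isClosed_of_mem hT).frontier_eq ▸ ⟨hxT, hxi⟩)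

end Mesh

section

variable {d : ℕ} {Ω : Set (Euc d)}

lemma Refines.trans {M₁ M₂ M₃ : Mesh d Ω}
    (h₁₂ : Refines M₁ M₂) (h₂₃ : Refines M₂ M₃) : Refines M₁ M₃ := by
  intro T₁ hT₁
  obtain ⟨T₂, hT₂, h₁⟩ := h₁₂ T₁ hT₁
  obtain ⟨T₃, hT₃, h₂⟩ := h₂₃ T₂ hT₂
  exact ⟨T₃, hT₃, h₁.trans h₂⟩

lemma refines_zero_of_forall_refines_succ {M : ℕ → Mesh d Ω}
    (hM : ∀ k, Refines (M (k + 1)) (M k)) (k : ℕ) : Refines (M k) (M 0) := by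
  induction k with
  | zero => exact fun T hT => ⟨T, hT, subset_rfl⟩
  | succ k ih => exact (hM k).trans ih

lemma affinePiece_eq {v : Euc d → ℝ} {A : Euc d →ᵃ[ℝ] ℝ} {T : Set (Euc d)}
    (hne : (interior T).Nonempty) (hA : Set.EqOn v A (interior T)) : affinePiece v T = A := by
  have hex : ∃ B : Euc d →ᵃ[ℝ] ℝ, Set.EqOn v B (interior T) := ⟨A, hA⟩
  rw [affinePiece, dif_pos hex]
  exact AffineMap.ext_on (isOpen_interior.affineSpan_eq_top hne)
    fun x hx => (hex.choose_spec hx).symm.trans (hA hx)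

lemma IsConformingP1.affinePiece_eqOn {M : Mesh d Ω} {v : Euc d → ℝ}
    (hv : IsConformingP1 M v) {T : Set (Euc d)} (hT : T ∈ M.elems) :
    Set.EqOn v (affinePiece v T) T := by
  obtain ⟨A, hA⟩ := hv.1 T hT
  rw [affinePiece_eq (M.interior_nonempty_of_mem hT) (hA.mono interior_subset)]
  exact hA

/-- The jumps of a conforming function vanish pointwise: `v` agrees with its pieces on the
closed elements, and vanishes on the boundary. -/
lemma IsConformingP1.isCR {M : Mesh d Ω} {v : Euc d → ℝ} (hv : IsConformingP1 M v) :
    IsCR M v := by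
  refine ⟨fun T hT => (hv.affinePiece_eqOn hT).mono interior_subset, fun F hF => ?_⟩
  obtain ⟨hT₁, hF₁⟩ := M.elemOfFace_mem F hF
  refine setIntegral_eq_zero_of_forall_eq_zero fun x hx => ?_
  by_cases hFi : F ∈ M.interiorFaces
  · obtain ⟨hT₂, hF₂, -⟩ := M.elemOfFace'_mem F hFi
    simp only [jumpFn, if_pos hFi]
    rw [← hv.affinePiece_eqOn hT₁ (hF₁ hx), ← hv.affinePiece_eqOn hT₂ (hF₂ hx), sub_self]
  · simp only [jumpFn, if_neg hFi]
    rw [← hv.affinePiece_eqOn hT₁ (hF₁ hx)]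
    exact hv.2.2 x (M.boundaryFace_subset F hF hFi hx)

lemma IsConformingP1.of_refines {Mf Mc : Mesh d Ω} (href : Refines Mf Mc) {v : Euc d → ℝ}
    (hv : IsConformingP1 Mc v) : IsConformingP1 Mf v := by
  refine ⟨fun T hT => ?_, hv.2⟩
  obtain ⟨Tc, hTc, hsub⟩ := href T hT
  obtain ⟨A, hA⟩ := hv.1 Tc hTc
  exact ⟨A, hA.mono hsub⟩

lemma brokenGrad_eq_of_mem_interior {M : Mesh d Ω} {v : Euc d → ℝ} {T : Set (Euc d)}
    (hT : T ∈ M.elems) {A : Euc d →ᵃ[ℝ] ℝ} (hA : Set.EqOn v A (interior T))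
    {x : Euc d} (hx : x ∈ interior T) :
    brokenGrad M v x =
      (InnerProductSpace.toDual ℝ (Euc d)).symm (LinearMap.toContinuousLinearMap A.linear) := by
  have hex : ∃ T, T ∈ M.elems ∧ x ∈ interior T := ⟨T, hT, hx⟩
  obtain ⟨hT', hx'⟩ := hex.choose_spec
  rw [brokenGrad, dif_pos hex, M.eq_of_mem_interior hT' hT hx' hx,
    affinePiece_eq (M.interior_nonempty_of_mem hT) hA]

lemma brokenGrad_of_notMem_closure (M : Mesh d Ω) (v : Euc d → ℝ) {x : Euc d}
    (hx : x ∉ closure Ω) : brokenGrad M v x = 0 := by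
  refine dif_neg fun ⟨T, hT, hxT⟩ => hx ?_
  rw [← M.covers]
  exact ⟨T, hT, interior_subset hxT⟩

lemma ae_brokenGrad_eq_of_refines {Mf Mc : Mesh d Ω} (href : Refines Mf Mc)
    {v : Euc d → ℝ} (hv : ∀ T ∈ Mc.elems, ∃ A : Euc d →ᵃ[ℝ] ℝ, Set.EqOn v A T) :
    ∀ᵐ x, brokenGrad Mf v x = brokenGrad Mc v x := by
  filter_upwards [Mf.ae_mem_interior] with x hx
  by_cases hxΩ : x ∈ closure Ω
  · rw [← Mf.covers] at hxΩ
    obtain ⟨Tf, hTf, hxTf⟩ := hxΩ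
    obtain ⟨Tc, hTc, hsub⟩ := href Tf hTf
    obtain ⟨A, hA⟩ := hv Tc hTc
    rw [brokenGrad_eq_of_mem_interior hTf ((hA.mono hsub).mono interior_subset)
        (hx Tf hTf hxTf),
      brokenGrad_eq_of_mem_interior hTc (hA.mono interior_subset)
        (interior_mono hsub (hx Tf hTf hxTf))]
  · rw [brokenGrad_of_notMem_closure Mf v hxΩ, brokenGrad_of_notMem_closure Mc v hxΩ]

lemma brokenNormP_eq_of_refines {Mf Mc : Mesh d Ω} (href : Refines Mf Mc)
    {v : Euc d → ℝ} (hv : ∀ T ∈ Mc.elems, ∃ A : Euc d →ᵃ[ℝ] ℝ, Set.EqOn v A T) (p : ℝ) :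
    brokenNormP p Mf v = brokenNormP p Mc v :=
  integral_congr_ae <| ae_restrict_of_ae <|
    (ae_brokenGrad_eq_of_refines href hv).mono fun _ hx => congrArg (‖·‖ ^ p) hx

lemma brokenNormP_nonneg (p : ℝ) (M : Mesh d Ω) (v : Euc d → ℝ) : 0 ≤ brokenNormP p M v :=
  integral_nonneg fun _ => Real.rpow_nonneg (norm_nonneg _) p

lemma brokenNormP_le_of_rayleigh_le {p : ℝ} {M : Mesh d Ω} {v w : Euc d → ℝ}
    (hv : lpNormP Ω p v = 1) (hw : lpNormP Ω p w = 1) (h : rayleigh p M v ≤ rayleigh p M w) :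
    brokenNormP p M v ≤ brokenNormP p M w := by
  simpa only [rayleigh, hv, hw, div_one] using h

lemma IsDiscEigenpair.brokenNormP_le {p μ : ℝ} {M : Mesh d Ω} {u v : Euc d → ℝ}
    (hu : IsDiscEigenpair p M μ u) (hv : IsCR M v) (hvn : lpNormP Ω p v = 1) :
    brokenNormP p M u ≤ brokenNormP p M v := by
  obtain ⟨-, -, hμ, hmin⟩ := hu
  have h := hmin v hv (by rw [hvn]; exact one_ne_zero)
  rwa [rayleigh, hvn, div_one, hμ] at h

end

theorem stmt15_general {d : ℕ} {p : ℝ} (hp : 1 < p) {Ω : Set (Euc d)}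
    (M : ℕ → Mesh d Ω) (hM : AdmissibleSeq M)
    (μ : ℕ → ℝ) (u : ℕ → Euc d → ℝ)
    (heig : ∀ k, IsDiscEigenpair p (M k) (μ k) (u k))
    (ut : ℕ → Euc d → ℝ)
    (hconf : ∀ k, IsConformingP1 (M k) (ut k) ∧ lpNormP Ω p (ut k) = 1 ∧
      ∀ v, IsConformingP1 (M k) v → lpNormP Ω p v ≠ 0 →
        rayleigh p (M k) (ut k) ≤ rayleigh p (M k) v) :
    (∀ k, μ k ^ p⁻¹ = brokenNormP p (M k) (u k) ^ p⁻¹ ∧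
      brokenNormP p (M k) (u k) ^ p⁻¹ ≤ brokenNormP p (M k) (ut k) ^ p⁻¹ ∧
      brokenNormP p (M k) (ut k) ^ p⁻¹ ≤ brokenNormP p (M 0) (ut 0) ^ p⁻¹) ∧
    ∀ k, μ k ≤ brokenNormP p (M 0) (ut 0) ∧
      brokenNormP p (M k) (u k) ≤ brokenNormP p (M 0) (ut 0) := by
  have hrefines := refines_zero_of_forall_refines_succ hM.1
  have hbound : ∀ k, brokenNormP p (M k) (u k) ≤ brokenNormP p (M k) (ut k) ∧
      brokenNormP p (M k) (ut k) ≤ brokenNormP p (M 0) (ut 0) := by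
    intro k
    obtain ⟨hconfk, hnormk, hmink⟩ := hconf k
    obtain ⟨hconf₀, hnorm₀, -⟩ := hconf 0
    have hconf₀k : IsConformingP1 (M k) (ut 0) := hconf₀.of_refines (hrefines k)
    refine ⟨(heig k).brokenNormP_le hconfk.isCR hnormk, ?_⟩
    calc brokenNormP p (M k) (ut k)
        ≤ brokenNormP p (M k) (ut 0) := brokenNormP_le_of_rayleigh_le hnormk hnorm₀
          (hmink (ut 0) hconf₀k (by rw [hnorm₀]; exact one_ne_zero))
      _ = brokenNormP p (M 0) (ut 0) := brokenNormP_eq_of_refines (hrefines k) hconf₀.1 p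
  have hμ : ∀ k, μ k = brokenNormP p (M k) (u k) := fun k => (heig k).2.2.1
  have hp' : 0 ≤ p⁻¹ := inv_nonneg.2 (by linarith)
  refine ⟨fun k => ⟨by rw [hμ k], ?_, ?_⟩, fun k => ⟨?_, ?_⟩⟩
  · exact Real.rpow_le_rpow (brokenNormP_nonneg p _ _) (hbound k).1 hp'
  · exact Real.rpow_le_rpow (brokenNormP_nonneg p _ _) (hbound k).2 hp'
  · exact hμ k ▸ (hbound k).1.trans (hbound k).2
  · exact (hbound k).1.trans (hbound k).2

/-- For every nested sequence of bisection meshes `{T_k}` with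
discrete Crouzeix–Raviart first eigenpairs `(μ_k, u_k)` normalized by
`‖u_k‖_{L^p(Ω)} = 1`, the uniform bound
`μ_k^{1/p} = ‖u_k‖_{1,p,k} ≤ |ũ_k|_{1,p} ≤ |ũ_0|_{1,p}` holds for all `k ≥ 0`, where
`ũ_k` is the `L^p`-normalized minimizer of the Rayleigh quotient over the conforming
piecewise-linear space `V_k`; in particular `{μ_k}` and `{‖u_k‖_{1,p,k}}` are bounded by
a constant depending only on `T_0` (namely `|ũ_0|_{1,p}^p`). -/
theorem stmt15 {d : ℕ} (hd : d = 2 ∨ d = 3) {p : ℝ} (hp : 1 < p)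
    {Ω : Set (Euc d)} (hΩo : IsOpen Ω) (hΩb : Bornology.IsBounded Ω)
    (hΩc : IsConnected Ω)
    (M : ℕ → Mesh d Ω) (hM : AdmissibleSeq M)
    (μ : ℕ → ℝ) (u : ℕ → Euc d → ℝ)
    (heig : ∀ k, IsDiscEigenpair p (M k) (μ k) (u k))
    (ut : ℕ → Euc d → ℝ)
    (hconf : ∀ k, IsConformingP1 (M k) (ut k) ∧ lpNormP Ω p (ut k) = 1 ∧
      ∀ v, IsConformingP1 (M k) v → lpNormP Ω p v ≠ 0 →
        rayleigh p (M k) (ut k) ≤ rayleigh p (M k) v) :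
    (∀ k, μ k ^ p⁻¹ = brokenNormP p (M k) (u k) ^ p⁻¹ ∧
      brokenNormP p (M k) (u k) ^ p⁻¹ ≤ brokenNormP p (M k) (ut k) ^ p⁻¹ ∧
      brokenNormP p (M k) (ut k) ^ p⁻¹ ≤ brokenNormP p (M 0) (ut 0) ^ p⁻¹) ∧
    ∀ k, μ k ≤ brokenNormP p (M 0) (ut 0) ∧
      brokenNormP p (M k) (u k) ≤ brokenNormP p (M 0) (ut 0) :=
  stmt15_general hp M hM μ u heig ut hconf

end
end
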